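/- arXiv:1811.08585 — 3 statements merged into one kernel-verified Lean document; each statement's English description precedes it below -/
import Mathlib

section
/- Let X be a measurable space and Y a type of labels. Let S and T' be probability measures on X, let H be a nonempty set of hypotheses h : X → Y, and let f_S, f_T, f_T̂ : X → Y be the source labeling function, target labeling function, and pseudo-labeling function. For a measure μ on X and functions f, g : X → Y write R_μ(f,g) := μ {x | f x ≠ g x} for the expected 0-1 risk. Define the combined error of the ideal joint hypothesis C := ⨅_{h ∈ H} (R_S(h, f_S) + R_{T'}(h, f_T)). Then C ≤ ⨅_{h ∈ H} (R_S(h, f_S) + R_{T'}(h, f_T̂)) + 2 · R_{T'}(f_S, f_T̂) + R_{T'}(f_T, f_T̂). -/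
open MeasureTheory

/-- Expected 0-1 risk of `f` against `g` under measure `μ`:
the `μ`-measure of the disagreement set. -/
noncomputable def risk01 {X Y : Type*} [MeasurableSpace X]
    (μ : Measure X) (f g : X → Y) : ENNReal :=
  μ {x | f x ≠ g x}

section

variable {X Y : Type*} [MeasurableSpace X] (μ : Measure X)

theorem risk01_comm (f g : X → Y) : risk01 μ f g = risk01 μ g f := by
  simp only [risk01, ne_comm]

theorem risk01_triangle (f g k : X → Y) :
    risk01 μ f k ≤ risk01 μ f g + risk01 μ g k := by
  refine (measure_mono fun x (hfk : f x ≠ k x) => ?_).trans (measure_union_le _ _)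
  by_cases hfg : f x = g x
  · exact Or.inr fun hgk => hfk (hfg.trans hgk)
  · exact Or.inl hfg

end

theorem ideal_joint_error_bound_general {X Y : Type*} [MeasurableSpace X]
    (S T' : Measure X)
    (H : Set (X → Y))
    (fS fT fThat : X → Y) :
    (⨅ h ∈ H, risk01 S h fS + risk01 T' h fT) ≤
      (⨅ h ∈ H, risk01 S h fS + risk01 T' h fThat)
        + 2 * risk01 T' fS fThat + risk01 T' fT fThat := by
  calc (⨅ h ∈ H, risk01 S h fS + risk01 T' h fT)
      ≤ ⨅ h ∈ H, risk01 S h fS + risk01 T' h fThat + risk01 T' fT fThat := by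
        refine iInf₂_mono fun h _ => ?_
        rw [add_assoc, risk01_comm T' fT]
        gcongr
        exact risk01_triangle T' h fThat fT
    _ = (⨅ h ∈ H, risk01 S h fS + risk01 T' h fThat) + risk01 T' fT fThat :=
        (ENNReal.iInf₂_add _).symm
    _ ≤ _ := by
        gcongr
        exact le_self_add

/-- Theorem 1 of the paper: the combined error of the ideal joint hypothesis
`C = ⨅ h ∈ H, R_S(h, f_S) + R_{T'}(h, f_T)` is bounded by
`⨅ h ∈ H, (R_S(h, f_S) + R_{T'}(h, f_T̂)) + 2 R_{T'}(f_S, f_T̂) + R_{T'}(f_T, f_T̂)`. -/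
theorem ideal_joint_error_bound {X Y : Type*} [MeasurableSpace X]
    (S T' : Measure X) [IsProbabilityMeasure S] [IsProbabilityMeasure T']
    (H : Set (X → Y)) (hH : H.Nonempty)
    (fS fT fThat : X → Y) :
    (⨅ h ∈ H, risk01 S h fS + risk01 T' h fT) ≤
      (⨅ h ∈ H, risk01 S h fS + risk01 T' h fThat)
        + 2 * risk01 T' fS fThat + risk01 T' fT fThat :=
  ideal_joint_error_bound_general S T' H fS fT fThat
end

section
/- Let n ≥ 1 and let z : Fin n → ℝ be a vector of logits. For a temperature T > 0 define the tempered softmax q_T(i) := exp(z i / T) / Σ_{j} exp(z j / T). Then the Shannon entropy H(T) := −Σ_i q_T(i) · log(q_T(i)) is monotone nondecreasing in T on (0, ∞): for all 0 < T ≤ T', H(T) ≤ H(T'). -/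
/-- The tempered softmax with logits `z` and temperature `T`:
`q_T(i) = exp(z i / T) / Σ_j exp(z j / T)`. -/
noncomputable def temperedSoftmax {n : ℕ} (z : Fin n → ℝ) (T : ℝ) (i : Fin n) : ℝ :=
  Real.exp (z i / T) / ∑ j, Real.exp (z j / T)

/-- The Shannon entropy of the tempered softmax distribution. -/
noncomputable def softmaxEntropy {n : ℕ} (z : Fin n → ℝ) (T : ℝ) : ℝ :=
  -∑ i, temperedSoftmax z T i * Real.log (temperedSoftmax z T i)

/-- Gibbs' inequality: entropy is bounded by cross entropy. -/
lemma gibbs_aux {n : ℕ} (p q : Fin n → ℝ) (hp : ∀ i, 0 < p i) (hq : ∀ i, 0 < q i)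
    (hps : ∑ i, p i = 1) (hqs : ∑ i, q i = 1) :
    -∑ i, p i * Real.log (p i) ≤ -∑ i, p i * Real.log (q i) := by
  rw [neg_le_neg_iff]
  have h : ∀ i ∈ Finset.univ, p i * Real.log (q i) - p i * Real.log (p i) ≤ q i - p i := by
    intro i _
    have h1 : Real.log (q i) - Real.log (p i) = Real.log (q i / p i) :=
      (Real.log_div (hq i).ne' (hp i).ne').symm
    have h2 : Real.log (q i / p i) ≤ q i / p i - 1 :=
      Real.log_le_sub_one_of_pos (div_pos (hq i) (hp i))
    calc p i * Real.log (q i) - p i * Real.log (p i)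
        = p i * Real.log (q i / p i) := by rw [← mul_sub, h1]
      _ ≤ p i * (q i / p i - 1) := mul_le_mul_of_nonneg_left h2 (hp i).le
      _ = q i - p i := by rw [mul_sub, mul_div_cancel₀ _ (hp i).ne', mul_one]
  have hsum := Finset.sum_le_sum h
  rw [Finset.sum_sub_distrib, Finset.sum_sub_distrib, hps, hqs] at hsum
  linarith

/-- A Chebyshev-type correlation inequality. -/
lemma cheb_aux {n : ℕ} (a b c : Fin n → ℝ)
    (h : ∀ i j, 0 ≤ (c i - c j) * (a i * b j - a j * b i)) :
    (∑ i, c i * b i) * (∑ i, a i) ≤ (∑ i, c i * a i) * (∑ i, b i) := by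
  have key : 0 ≤ ∑ i, ∑ j, (c i - c j) * (a i * b j - a j * b i) :=
    Finset.sum_nonneg fun i _ => Finset.sum_nonneg fun j _ => h i j
  have inner : ∀ i : Fin n, (∑ j, (c i - c j) * (a i * b j - a j * b i))
      = c i * a i * (∑ j, b j) - c i * b i * (∑ j, a j)
        - a i * (∑ j, c j * b j) + b i * (∑ j, c j * a j) := by
    intro i
    rw [Finset.mul_sum, Finset.mul_sum, Finset.mul_sum, Finset.mul_sum,
      ← Finset.sum_sub_distrib, ← Finset.sum_sub_distrib, ← Finset.sum_add_distrib]
    exact Finset.sum_congr rfl fun j _ => by ring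
  rw [Finset.sum_congr rfl (fun i _ => inner i)] at key
  simp only [Finset.sum_add_distrib, Finset.sum_sub_distrib, ← Finset.sum_mul] at key
  linarith

/-- The entropy of the tempered softmax is monotone nondecreasing in the
temperature on `(0, ∞)`: raising `T` produces a softer output distribution. -/
theorem softmaxEntropy_mono {n : ℕ} (hn : 1 ≤ n) (z : Fin n → ℝ)
    (T T' : ℝ) (hT : 0 < T) (hTT' : T ≤ T') :
    softmaxEntropy z T ≤ softmaxEntropy z T' := by
  have hT' : 0 < T' := lt_of_lt_of_le hT hTT'
  have hne : (Finset.univ : Finset (Fin n)).Nonempty := ⟨⟨0, hn⟩, Finset.mem_univ _⟩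
  set Z : ℝ := ∑ j, Real.exp (z j / T) with hZdef
  set Z' : ℝ := ∑ j, Real.exp (z j / T') with hZ'def
  have hZ : 0 < Z := Finset.sum_pos (fun _ _ => Real.exp_pos _) hne
  have hZ' : 0 < Z' := Finset.sum_pos (fun _ _ => Real.exp_pos _) hne
  set p : Fin n → ℝ := temperedSoftmax z T with hpdef
  set q : Fin n → ℝ := temperedSoftmax z T' with hqdef
  have hp : ∀ i, 0 < p i := fun i => div_pos (Real.exp_pos _) hZ
  have hq : ∀ i, 0 < q i := fun i => div_pos (Real.exp_pos _) hZ'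
  have hps : ∑ i, p i = 1 := by
    simp only [hpdef, temperedSoftmax, ← Finset.sum_div, ← hZdef]
    exact div_self hZ.ne'
  have hqs : ∑ i, q i = 1 := by
    simp only [hqdef, temperedSoftmax, ← Finset.sum_div, ← hZ'def]
    exact div_self hZ'.ne'
  have hlogq : ∀ i, Real.log (q i) = z i / T' - Real.log Z' := by
    intro i
    simp only [hqdef, temperedSoftmax, ← hZ'def]
    rw [Real.log_div (Real.exp_ne_zero _) hZ'.ne', Real.log_exp]
  -- Gibbs: H(p) ≤ cross entropy
  have hgibbs : softmaxEntropy z T ≤ -∑ i, p i * Real.log (q i) :=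
    gibbs_aux p q hp hq hps hqs
  -- cross entropy and entropy of q in closed form
  have hcross : -∑ i, p i * Real.log (q i) = Real.log Z' - (∑ i, p i * z i) / T' := by
    simp only [hlogq, mul_sub]
    rw [Finset.sum_sub_distrib, ← Finset.sum_mul, hps, neg_sub, one_mul, Finset.sum_div]
    congr 1
    exact Finset.sum_congr rfl fun i _ => by rw [mul_div_assoc]
  have hHq : softmaxEntropy z T' = Real.log Z' - (∑ i, q i * z i) / T' := by
    unfold softmaxEntropy
    simp only [← hqdef, hlogq, mul_sub]
    rw [Finset.sum_sub_distrib, ← Finset.sum_mul, hqs, neg_sub, one_mul, Finset.sum_div]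
    congr 1
    exact Finset.sum_congr rfl fun i _ => by rw [mul_div_assoc]
  -- key: mean of z under q is at most mean of z under p
  have hmean : ∑ i, q i * z i ≤ ∑ i, p i * z i := by
    have hcheb : (∑ i, z i * Real.exp (z i / T')) * (∑ i, Real.exp (z i / T))
        ≤ (∑ i, z i * Real.exp (z i / T)) * (∑ i, Real.exp (z i / T')) := by
      apply cheb_aux
      intro i j
      rcases le_total (z j) (z i) with hij | hij
      · apply mul_nonneg (by linarith)
        rw [sub_nonneg, ← Real.exp_add, ← Real.exp_add]
        apply Real.exp_le_exp.mpr
        have h1 : 1 / T' ≤ 1 / T := one_div_le_one_div_of_le hT hTT'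
        have h2 : 0 ≤ (z i - z j) * (1 / T - 1 / T') := mul_nonneg (by linarith) (by linarith)
        have e1 : z i / T = z i * (1 / T) := by ring
        have e2 : z j / T = z j * (1 / T) := by ring
        have e3 : z i / T' = z i * (1 / T') := by ring
        have e4 : z j / T' = z j * (1 / T') := by ring
        rw [e1, e2, e3, e4]; nlinarith
      · apply mul_nonneg_iff.mpr
        right
        refine ⟨by linarith, ?_⟩
        rw [sub_nonpos, ← Real.exp_add, ← Real.exp_add]
        apply Real.exp_le_exp.mpr
        have h1 : 1 / T' ≤ 1 / T := one_div_le_one_div_of_le hT hTT'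
        have h2 : 0 ≤ (z j - z i) * (1 / T - 1 / T') := mul_nonneg (by linarith) (by linarith)
        have e1 : z i / T = z i * (1 / T) := by ring
        have e2 : z j / T = z j * (1 / T) := by ring
        have e3 : z i / T' = z i * (1 / T') := by ring
        have e4 : z j / T' = z j * (1 / T') := by ring
        rw [e1, e2, e3, e4]; nlinarith
    have ep : ∑ i, p i * z i = (∑ i, z i * Real.exp (z i / T)) / Z := by
      rw [Finset.sum_div]
      exact Finset.sum_congr rfl fun i _ => by
        simp only [hpdef, temperedSoftmax, ← hZdef]; ring
    have eq' : ∑ i, q i * z i = (∑ i, z i * Real.exp (z i / T')) / Z' := by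
      rw [Finset.sum_div]
      exact Finset.sum_congr rfl fun i _ => by
        simp only [hqdef, temperedSoftmax, ← hZ'def]; ring
    rw [ep, eq', div_le_div_iff₀ hZ' hZ]
    exact hcheb
  calc softmaxEntropy z T ≤ -∑ i, p i * Real.log (q i) := hgibbs
    _ = Real.log Z' - (∑ i, p i * z i) / T' := hcross
    _ ≤ Real.log Z' - (∑ i, q i * z i) / T' := by gcongr
    _ = softmaxEntropy z T' := hHq.symm
end

section
/- Let n ≥ 1 and let z : Fin n → ℝ be a vector of logits. For a temperature T > 0 define the tempered softmax q_T(i) := exp(z i / T) / Σ_{j} exp(z j / T). Then the maximal class probability is monotone nonincreasing in the temperature: for all 0 < T ≤ T', (⨆ i, q_{T'}(i)) ≤ (⨆ i, q_T(i)). -/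
open Finset Real

section

variable {n : ℕ} (z : Fin n → ℝ)

lemma temperedSoftmax_nonneg (T : ℝ) (i : Fin n) : 0 ≤ temperedSoftmax z T i :=
  div_nonneg (exp_nonneg _) (sum_nonneg fun _ _ => exp_nonneg _)

lemma temperedSoftmax_eq_inv_sum_exp_sub (T : ℝ) (m : Fin n) :
    temperedSoftmax z T m = (∑ j, exp ((z j - z m) / T))⁻¹ := by
  simp only [sub_div, exp_sub, ← sum_div, temperedSoftmax, inv_div]

variable {z}

lemma temperedSoftmax_le_of_le {T : ℝ} (hT : 0 ≤ T) {i m : Fin n} (h : z i ≤ z m) :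
    temperedSoftmax z T i ≤ temperedSoftmax z T m :=
  div_le_div_of_nonneg_right (exp_le_exp.2 (div_le_div_of_nonneg_right h hT))
    (sum_nonneg fun _ _ => exp_nonneg _)

lemma temperedSoftmax_antitoneOn_of_forall_le {m : Fin n} (hm : ∀ j, z j ≤ z m) :
    AntitoneOn (fun T => temperedSoftmax z T m) (Set.Ioi 0) := by
  intro T hT T' _ hTT'
  simp only [temperedSoftmax_eq_inv_sum_exp_sub]
  refine inv_anti₀ (sum_pos (fun _ _ => exp_pos _) ⟨m, mem_univ m⟩)
    (sum_le_sum fun j _ => exp_le_exp.2 ?_)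
  simpa only [div_eq_mul_inv] using
    mul_le_mul_of_nonpos_left (inv_anti₀ hT hTT') (sub_nonpos.2 (hm j))

end

theorem temperedSoftmax_max_antitone_general {n : ℕ} (z : Fin n → ℝ)
    (T T' : ℝ) (hT : 0 < T) (hTT' : T ≤ T') :
    (⨆ i, temperedSoftmax z T' i) ≤ ⨆ i, temperedSoftmax z T i := by
  refine Real.iSup_le (fun i => ?_) (Real.iSup_nonneg (temperedSoftmax_nonneg z T))
  have : Nonempty (Fin n) := ⟨i⟩
  obtain ⟨m, hm⟩ := Finite.exists_max z
  have hT' : 0 < T' := hT.trans_le hTT'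
  calc temperedSoftmax z T' i
      ≤ temperedSoftmax z T' m := temperedSoftmax_le_of_le hT'.le (hm i)
    _ ≤ temperedSoftmax z T m := temperedSoftmax_antitoneOn_of_forall_le hm hT hT' hTT'
    _ ≤ ⨆ i, temperedSoftmax z T i := le_ciSup (Finite.bddAbove_range _) m

/-- The maximal class probability of the tempered softmax is monotone
nonincreasing in the temperature: for `0 < T ≤ T'`,
`⨆ i, q_{T'}(i) ≤ ⨆ i, q_T(i)`. -/
theorem temperedSoftmax_max_antitone {n : ℕ} (hn : 1 ≤ n) (z : Fin n → ℝ)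
    (T T' : ℝ) (hT : 0 < T) (hTT' : T ≤ T') :
    (⨆ i, temperedSoftmax z T' i) ≤ ⨆ i, temperedSoftmax z T i :=
  temperedSoftmax_max_antitone_general z T T' hT hTT'
end
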